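/- Let D be a digraph of order n and k a positive integer with n ≥ 4k+2, G the underlying graph of D, and suppose (X₁,…,X_t,Y) is a partition of V(D) witnessing that D is a k-obstruction with |Y| ≥ 2. Then Y = {v ∈ V(G) : d_G(v) ≥ 2k+1}. -/
import Mathlib

open Finset

/-- The number of arcs of the digraph `D` leaving the vertex set `S`. -/
noncomputable def dicut {V : Type*} [Fintype V] (D : V → V → Prop) (S : Finset V) : ℕ :=
  Nat.card {p : V × V // p.1 ∈ S ∧ p.2 ∉ S ∧ D p.1 p.2}

/-- The number of edges of the underlying graph of `D` leaving `S`.  In particular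
`undirCut D {v}` is the degree of `v` in the underlying graph. -/
noncomputable def undirCut {V : Type*} [Fintype V] (D : V → V → Prop) (S : Finset V) : ℕ :=
  dicut D S + dicut (fun u v => D v u) S

section Aux

variable {V : Type*} [Fintype V] [DecidableEq V]

private lemma dicut_eq_sum (D : V → V → Prop) [DecidableRel D] (S : Finset V) :
    dicut D S = ∑ v ∈ S, (univ.filter fun w => w ∉ S ∧ D v w).card := by
  classical
  rw [dicut, Nat.card_eq_fintype_card, Fintype.card_subtype]
  rw [← Finset.univ_product_univ]
  simp only [Finset.card_filter, Finset.sum_product]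
  rw [← Finset.sum_filter_add_sum_filter_not univ (· ∈ S)]
  have h2 : ∀ v ∈ univ.filter (· ∉ S), (∑ w : V, if v ∈ S ∧ w ∉ S ∧ D v w then 1 else 0) = 0 := by
    intro v hv
    simp only [mem_filter] at hv
    simp [hv.2]
  rw [Finset.sum_congr rfl h2, Finset.sum_const_zero, add_zero, Finset.filter_univ_mem]
  refine Finset.sum_congr rfl fun v hv => Finset.sum_congr rfl fun w _ => ?_
  simp [hv]

private lemma undirCut_eq_sum (D : V → V → Prop) [DecidableRel D] (S : Finset V) :
    undirCut D S = ∑ v ∈ S,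
      ((univ.filter fun w => w ∉ S ∧ D v w).card + (univ.filter fun w => w ∉ S ∧ D w v).card) := by
  classical
  rw [undirCut, dicut_eq_sum, dicut_eq_sum, ← Finset.sum_add_distrib]

/-- If every vertex of `T` avoids `S` and is joined to `v` by exactly one arc, then
`|T|` is a lower bound on the local cut of `v` across `S`. -/
private lemma card_le_out_add_inn (D : V → V → Prop) [DecidableRel D] (v : V)
    (S T : Finset V) (hdisj : ∀ y ∈ T, y ∉ S)
    (h : ∀ y ∈ T, (D v y ∧ ¬ D y v) ∨ (D y v ∧ ¬ D v y)) :
    T.card ≤ (univ.filter fun w => w ∉ S ∧ D v w).card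
      + (univ.filter fun w => w ∉ S ∧ D w v).card := by
  classical
  have hsplit : (T.filter fun y => D v y).card + (T.filter fun y => ¬ D v y).card = T.card :=
    Finset.card_filter_add_card_filter_not _
  have h1 : T.filter (fun y => D v y) ⊆ univ.filter fun w => w ∉ S ∧ D v w := by
    intro y hy
    simp only [mem_filter] at hy ⊢
    exact ⟨mem_univ y, hdisj y hy.1, hy.2⟩
  have h2 : T.filter (fun y => ¬ D v y) ⊆ univ.filter fun w => w ∉ S ∧ D w v := by
    intro y hy
    simp only [mem_filter] at hy ⊢
    refine ⟨mem_univ y, hdisj y hy.1, ?_⟩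
    rcases h y hy.1 with ⟨h3, _⟩ | ⟨h3, _⟩
    · exact absurd h3 hy.2
    · exact h3
  calc T.card = (T.filter fun y => D v y).card + (T.filter fun y => ¬ D v y).card := hsplit.symm
    _ ≤ _ := Nat.add_le_add (Finset.card_le_card h1) (Finset.card_le_card h2)

end Aux

/-- If `(X₁,…,X_t,Y)` witnesses that the digraph `D` of order `n ≥ 4k+2` is a
`k`-obstruction and `|Y| ≥ 2`, then `Y` is exactly the set of vertices of degree at least
`2k+1` in the underlying graph. -/
theorem stmt_6 {V : Type*} [Fintype V] [DecidableEq V] (D : V → V → Prop)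
    (hirr : ∀ v, ¬ D v v) (k t : ℕ) (hk : 1 ≤ k) (ht : 1 ≤ t)
    (hn : 4 * k + 2 ≤ Fintype.card V)
    (Xs : Fin t → Finset V) (Y : Finset V)
    (hXne : ∀ i, (Xs i).Nonempty) (hYne : Y.Nonempty)
    (hdisjXX : ∀ i j, i ≠ j → Disjoint (Xs i) (Xs j))
    (hdisjXY : ∀ i, Disjoint (Xs i) Y)
    (hcover : (Finset.univ.biUnion Xs) ∪ Y = Finset.univ)
    (hdeg : ∀ i, undirCut D (Xs i) = 2 * k)
    (hone : ∀ x ∈ Finset.univ.biUnion Xs, ∀ y ∈ Y,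
      (D x y ∧ ¬ D y x) ∨ (D y x ∧ ¬ D x y))
    (hodd : ∃ m : ℤ, Odd m ∧
      2 * m = 2 * (dicut D (Finset.univ.biUnion Xs) : ℤ)
        - ((Finset.univ.biUnion Xs).card : ℤ) * (Y.card : ℤ))
    (hY2 : 2 ≤ Y.card) :
    ∀ v : V, v ∈ Y ↔ 2 * k + 1 ≤ undirCut D {v} := by
  classical
  set X : Finset V := Finset.univ.biUnion Xs with hX
  -- X and Y are disjoint
  have hXY : Disjoint X Y := by
    rw [hX, Finset.disjoint_biUnion_left]
    exact fun i _ => hdisjXY i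
  -- every x in any Xs i has crossing degree at least |Y|
  have hYlow : ∀ i, ∀ x ∈ Xs i, Y.card ≤
      (univ.filter fun w => w ∉ Xs i ∧ D x w).card
        + (univ.filter fun w => w ∉ Xs i ∧ D w x).card := by
    intro i x hx
    refine card_le_out_add_inn D x (Xs i) Y ?_ ?_
    · intro y hy
      exact fun hy' => (Finset.disjoint_left.mp (hdisjXY i)) hy' hy
    · intro y hy
      exact hone x (Finset.mem_biUnion.mpr ⟨i, mem_univ i, hx⟩) y hy
  -- hence |Xs i| * |Y| ≤ 2k
  have hXiY : ∀ i, (Xs i).card * Y.card ≤ 2 * k := by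
    intro i
    calc (Xs i).card * Y.card = ∑ _x ∈ Xs i, Y.card := by rw [Finset.sum_const, smul_eq_mul]
      _ ≤ ∑ x ∈ Xs i, ((univ.filter fun w => w ∉ Xs i ∧ D x w).card
          + (univ.filter fun w => w ∉ Xs i ∧ D w x).card) :=
        Finset.sum_le_sum (hYlow i)
      _ = undirCut D (Xs i) := (undirCut_eq_sum D (Xs i)).symm
      _ = 2 * k := hdeg i
  -- |Y| ≤ 2k
  have hYle : Y.card ≤ 2 * k := by
    obtain ⟨i⟩ : Nonempty (Fin t) := ⟨⟨0, ht⟩⟩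
    have h1 : 1 ≤ (Xs i).card := Finset.card_pos.mpr (hXne i)
    calc Y.card = 1 * Y.card := (one_mul _).symm
      _ ≤ (Xs i).card * Y.card := Nat.mul_le_mul_right _ h1
      _ ≤ 2 * k := hXiY i
  -- |X| ≥ 2k+2
  have hcard : X.card + Y.card = Fintype.card V := by
    rw [← Finset.card_union_of_disjoint hXY, hcover, Finset.card_univ]
  have hXge : 2 * k + 2 ≤ X.card := by omega
  intro v
  constructor
  · -- v ∈ Y ⇒ degree ≥ 2k+1, since degree ≥ |X| ≥ 2k+2
    intro hv
    have hXbound : X.card ≤ undirCut D {v} := by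
      rw [undirCut_eq_sum, Finset.sum_singleton]
      refine card_le_out_add_inn D v {v} X ?_ ?_
      · intro x hx
        simp only [Finset.mem_singleton]
        intro h; subst h
        exact (Finset.disjoint_left.mp hXY) hx hv
      · intro x hx
        rcases hone x hx v hv with ⟨h1, h2⟩ | ⟨h1, h2⟩
        · exact Or.inr ⟨h1, h2⟩
        · exact Or.inl ⟨h1, h2⟩
    omega
  · -- contrapositive: v ∉ Y ⇒ v ∈ some Xs i ⇒ degree ≤ 2k
    intro hdegv
    by_contra hv
    have hvX : v ∈ X := by
      have : v ∈ X ∪ Y := by rw [hcover]; exact mem_univ v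
      rcases Finset.mem_union.mp this with h | h
      · exact h
      · exact absurd h hv
    obtain ⟨i, _, hvXi⟩ := Finset.mem_biUnion.mp hvX
    -- split the degree of v at Xs i
    set out1 : ℕ := (univ.filter fun w => w ∉ Xs i ∧ D v w).card with hout1
    set inn1 : ℕ := (univ.filter fun w => w ∉ Xs i ∧ D w v).card with hinn1
    set m : ℕ := (Xs i).card - 1 with hm
    have hXicard : 1 ≤ (Xs i).card := Finset.card_pos.mpr (hXne i)
    -- degree of v ≤ 2m + out1 + inn1
    have hdegsplit : undirCut D {v} ≤ 2 * m + (out1 + inn1) := by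
      rw [undirCut_eq_sum, Finset.sum_singleton]
      have key : ∀ (R : V → V → Prop) [DecidableRel R],
          (univ.filter fun w => w ∉ ({v} : Finset V) ∧ R v w).card ≤
            m + (univ.filter fun w => w ∉ Xs i ∧ R v w).card := by
        intro R _
        have hsplit := Finset.card_filter_add_card_filter_not
          (s := univ.filter fun w => w ∉ ({v} : Finset V) ∧ R v w) (p := fun w => w ∈ Xs i)
        rw [← hsplit]
        refine Nat.add_le_add ?_ ?_
        · have hsub : (univ.filter fun w => w ∉ ({v} : Finset V) ∧ R v w).filter
              (fun w => w ∈ Xs i) ⊆ (Xs i).erase v := by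
            intro w hw
            simp only [mem_filter, Finset.mem_singleton] at hw
            exact Finset.mem_erase.mpr ⟨hw.1.2.1, hw.2⟩
          calc _ ≤ ((Xs i).erase v).card := Finset.card_le_card hsub
            _ = m := by rw [Finset.card_erase_of_mem hvXi]
        · refine Finset.card_le_card ?_
          intro w hw
          simp only [mem_filter, Finset.mem_singleton] at hw ⊢
          exact ⟨mem_univ w, hw.2, hw.1.2.2⟩
      have h1 := key D
      have h2 := key (fun u w => D w u)
      omega
    -- out1 + inn1 + m * |Y| ≤ 2k
    have hcut : out1 + inn1 + m * Y.card ≤ 2 * k := by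
      have := hdeg i
      rw [undirCut_eq_sum] at this
      rw [← this]
      rw [← Finset.add_sum_erase _ _ hvXi]
      refine Nat.add_le_add (le_of_eq rfl) ?_
      calc m * Y.card = ∑ _x ∈ (Xs i).erase v, Y.card := by
            rw [Finset.sum_const, smul_eq_mul, Finset.card_erase_of_mem hvXi]
        _ ≤ _ := Finset.sum_le_sum fun x hx => hYlow i x (Finset.mem_of_mem_erase hx)
    have h2m : 2 * m ≤ m * Y.card := by
      calc 2 * m = m * 2 := Nat.mul_comm _ _
        _ ≤ m * Y.card := Nat.mul_le_mul_left _ hY2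
    omega
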